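/- There exist universal constants c0, c1, c2 > 0 with the following property. In the structured setting (U, V ∈ R^{n×r}, Ū, V̄ ∈ R^{n×r̄} with orthonormal columns, col(U) ⊆ col(Ū), col(V) ⊆ col(V̄), standard incoherence parameters μ0 and μ̄0 respectively), for any fixed matrix Z ∈ R^{n×n} and a Bernoulli(p) sample Ω with p ≥ c0 · μ0 μ̄0 r r̄ log n / n, with probability at least 1 − c1 n^{−c2}, ‖(P_T R_Ω − P_T)Z‖_∞ ≤ (1/2) ‖Z‖_∞. -/

import Mathlib

/-!
Entry `(a, b)` of `(P_T R_Ω - P_T) Z` is `∑ᵢⱼ K_{ab,ij} Z_ij (δ_ij / p - 1)`, where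
`K_{ab,ij} = (P_T (e_i e_jᵀ))_{ab}`: a sum of independent centred variables. Incoherence, together with `‖Uᵀ e_i‖ ≤ ‖Ūᵀ e_i‖` (from `col U ⊆ col Ū`), bounds
every weight by `3 μ0 μ̄0 r r̄ / n²`, and `|δ/p - 1| ≤ 1/p`; Hoeffding's inequality then bounds the
probability that the entry exceeds `‖Z‖_∞ / 2` by `2 n⁻⁴` as soon as
`p ≥ 100 μ0 μ̄0 r r̄ log n / n`. A union bound over the `n²` entries gives failure probability
at most `2 n⁻²`.
-/

open MeasureTheory Matrix

noncomputable section

/-- Frobenius norm of a real matrix. -/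
def frobNorm {m n : ℕ} (X : Matrix (Fin m) (Fin n) ℝ) : ℝ :=
  Real.sqrt (∑ i, ∑ j, (X i j) ^ 2)

/-- Nuclear norm: sum of singular values (square roots of eigenvalues of XᵀX). -/
def nuclearNorm {m n : ℕ} (X : Matrix (Fin m) (Fin n) ℝ) : ℝ :=
  ∑ i, Real.sqrt ((show (Xᵀ * X).IsHermitian from by
    simpa using Matrix.isHermitian_conjTranspose_mul_self X).eigenvalues i)

/-- Spectral norm: operator norm of the associated Euclidean linear map. -/
def specNorm {m n : ℕ} (X : Matrix (Fin m) (Fin n) ℝ) : ℝ :=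
  ‖(Matrix.toEuclideanLin X).toContinuousLinearMap‖

/-- Entrywise ℓ∞ norm. -/
def linf {m n : ℕ} (X : Matrix (Fin m) (Fin n) ℝ) : ℝ := ⨆ i, ⨆ j, |X i j|

/-- ℓ∞,2 norm: maximum of the largest row and column ℓ₂ norms. -/
def linf2 {n : ℕ} (X : Matrix (Fin n) (Fin n) ℝ) : ℝ :=
  max (⨆ i, Real.sqrt (∑ j, (X i j) ^ 2)) (⨆ j, Real.sqrt (∑ i, (X i j) ^ 2))

/-- Operator norm (w.r.t. the Frobenius norm) of a map on n×n matrices. -/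
def opNormMap {n : ℕ} (A : Matrix (Fin n) (Fin n) ℝ → Matrix (Fin n) (Fin n) ℝ) : ℝ :=
  ⨆ Z : {Z : Matrix (Fin n) (Fin n) ℝ // frobNorm Z ≤ 1}, frobNorm (A Z.1)

/-- P_Ω for a Boolean sample ω. -/
def projB {n : ℕ} (ω : Fin n × Fin n → Bool) (Z : Matrix (Fin n) (Fin n) ℝ) :
    Matrix (Fin n) (Fin n) ℝ := fun i j => if ω (i, j) then Z i j else 0

open Classical in
/-- P_Ω for a set Ω of indices. -/
def projS {n : ℕ} (Ω : Set (Fin n × Fin n)) (Z : Matrix (Fin n) (Fin n) ℝ) :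
    Matrix (Fin n) (Fin n) ℝ := fun i j => if (i, j) ∈ Ω then Z i j else 0

/-- The tangent-space projection P_T determined by U and V. -/
def projT {n r : ℕ} (U V : Matrix (Fin n) (Fin r) ℝ) (Z : Matrix (Fin n) (Fin n) ℝ) :
    Matrix (Fin n) (Fin n) ℝ :=
  U * Uᵀ * Z + Z * V * Vᵀ - U * Uᵀ * Z * V * Vᵀ

/-- Bernoulli(p) measure on Bool. -/
def bern (p : ℝ) : Measure Bool :=
  ENNReal.ofReal p • Measure.dirac true + ENNReal.ofReal (1 - p) • Measure.dirac false

/-- Product Bernoulli(p) measure on index samples: each (i,j) observed independently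
with probability p. -/
def sampleMeasure (n : ℕ) (p : ℝ) : Measure (Fin n × Fin n → Bool) :=
  Measure.pi fun _ => bern p

/-- ℓ₂ norm of the i-th row of U, i.e. ‖Uᵀ e_i‖₂. -/
def rowNorm {n r : ℕ} (U : Matrix (Fin n) (Fin r) ℝ) (i : Fin n) : ℝ :=
  Real.sqrt (∑ k, (U i k) ^ 2)

/-- The tangent-space projection P_T in the structured (cluster) setting. -/
def projTc {n r rb : ℕ} (U V : Matrix (Fin n) (Fin r) ℝ)
    (Ub Vb : Matrix (Fin n) (Fin rb) ℝ) (Z : Matrix (Fin n) (Fin n) ℝ) :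
    Matrix (Fin n) (Fin n) ℝ :=
  U * Uᵀ * Z * Vb * Vbᵀ + Ub * Ubᵀ * Z * V * Vᵀ - U * Uᵀ * Z * V * Vᵀ

/-- The projection P_{T⊥} in the structured (cluster) setting. -/
def projTperpC {n r rb : ℕ} (U V : Matrix (Fin n) (Fin r) ℝ)
    (Ub Vb : Matrix (Fin n) (Fin rb) ℝ) (Z : Matrix (Fin n) (Fin n) ℝ) :
    Matrix (Fin n) (Fin n) ℝ :=
  (Ub * Ubᵀ - U * Uᵀ) * Z * (Vb * Vbᵀ - V * Vᵀ)

open ProbabilityTheory Real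

def bernNoise (p : ℝ) (b : Bool) : ℝ := if b then p⁻¹ - 1 else -1

section Bernoulli

variable {p : ℝ}

lemma isProbabilityMeasure_bern (hp0 : 0 ≤ p) (hp1 : p ≤ 1) : IsProbabilityMeasure (bern p) := by
  constructor
  simp [bern, ← ENNReal.ofReal_add hp0 (sub_nonneg.2 hp1)]

lemma isProbabilityMeasure_sampleMeasure {n : ℕ} (hp0 : 0 ≤ p) (hp1 : p ≤ 1) :
    IsProbabilityMeasure (sampleMeasure n p) :=
  have := isProbabilityMeasure_bern hp0 hp1
  inferInstanceAs (IsProbabilityMeasure (Measure.pi _))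

lemma integral_bern (hp0 : 0 ≤ p) (hp1 : p ≤ 1) (f : Bool → ℝ) :
    ∫ b, f b ∂bern p = p * f true + (1 - p) * f false := by
  have := isProbabilityMeasure_bern hp0 hp1
  rw [integral_fintype .of_finite]
  simp [bern, measureReal_def, hp0, sub_nonneg.2 hp1]

lemma integral_bernNoise (hp0 : 0 < p) (hp1 : p ≤ 1) : ∫ b, bernNoise p b ∂bern p = 0 := by
  rw [integral_bern hp0.le hp1]
  simp only [bernNoise, ↓reduceIte, Bool.false_eq_true]
  field_simp
  ring

lemma abs_bernNoise_le (hp0 : 0 < p) (hp1 : p ≤ 1) (b : Bool) : |bernNoise p b| ≤ p⁻¹ := by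
  have : 1 ≤ p⁻¹ := one_le_inv₀ hp0 |>.2 hp1
  cases b <;> simp [bernNoise, abs_le] <;> linarith

end Bernoulli

lemma measureReal_le_sum_mul_bernNoise {ι : Type*} [Fintype ι] {p K ε : ℝ} (hp0 : 0 < p)
    (hp1 : p ≤ 1) (c : ι → ℝ) (hc : ∀ i, |c i| ≤ K) (hε : 0 ≤ ε) :
    (Measure.pi fun _ : ι => bern p).real {ω | ε ≤ ∑ i, c i * bernNoise p (ω i)} ≤
      exp (-ε ^ 2 / (2 * Fintype.card ι * (K / p) ^ 2)) := by
  have := isProbabilityMeasure_bern hp0.le hp1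
  have hsubG : ∀ i, HasSubgaussianMGF (fun ω : ι → Bool => c i * bernNoise p (ω i))
      ((‖K / p - -(K / p)‖₊ / 2) ^ 2) (Measure.pi fun _ : ι => bern p) := by
    intro i
    refine hasSubgaussianMGF_of_mem_Icc_of_integral_eq_zero (Measurable.of_discrete.aemeasurable)
      (ae_of_all _ fun ω => ?_) ?_
    · rw [Set.mem_Icc, ← abs_le, abs_mul, div_eq_mul_inv]
      exact mul_le_mul (hc i) (abs_bernNoise_le hp0 hp1 _) (abs_nonneg _)
        ((abs_nonneg _).trans (hc i))
    · rw [integral_const_mul,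
        integral_comp_eval (μ := fun _ => bern p) (i := i) (f := bernNoise p) .of_discrete,
        integral_bernNoise hp0 hp1, mul_zero]
  have h := HasSubgaussianMGF.measure_sum_ge_le_of_iIndepFun
    (iIndepFun_pi (X := fun i b => c i * bernNoise p b) fun _ => Measurable.of_discrete.aemeasurable)
    (s := Finset.univ) (fun i _ => hsubG i) hε
  refine h.trans_eq ?_
  push_cast [Finset.sum_const, Finset.card_univ, coe_nnnorm, Real.norm_eq_abs]
  rw [div_pow, sq_abs, nsmul_eq_mul]
  ring_nf

lemma measureReal_le_abs_sum_mul_bernNoise {ι : Type*} [Fintype ι] {p K ε : ℝ} (hp0 : 0 < p)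
    (hp1 : p ≤ 1) (c : ι → ℝ) (hc : ∀ i, |c i| ≤ K) (hε : 0 ≤ ε) :
    (Measure.pi fun _ : ι => bern p).real {ω | ε ≤ |∑ i, c i * bernNoise p (ω i)|} ≤
      2 * exp (-ε ^ 2 / (2 * Fintype.card ι * (K / p) ^ 2)) := by
  have := isProbabilityMeasure_bern hp0.le hp1
  have hsplit : {ω : ι → Bool | ε ≤ |∑ i, c i * bernNoise p (ω i)|} ⊆
      {ω | ε ≤ ∑ i, c i * bernNoise p (ω i)} ∪ {ω | ε ≤ ∑ i, -c i * bernNoise p (ω i)} := by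
    intro ω hω
    simp only [neg_mul, Finset.sum_neg_distrib, Set.mem_union, Set.mem_ofPred_eq] at hω ⊢
    exact (le_abs'.1 hω).symm.imp_right le_neg_of_le_neg
  calc _ ≤ _ := measureReal_mono hsplit
    _ ≤ _ := measureReal_union_le _ _
    _ ≤ _ := by
      rw [two_mul]
      gcongr
      · exact measureReal_le_sum_mul_bernNoise hp0 hp1 c hc hε
      · exact measureReal_le_sum_mul_bernNoise hp0 hp1 (-c ·) (by simpa using hc) hε

section RowNorm

variable {n r : ℕ}

lemma sq_rowNorm (A : Matrix (Fin n) (Fin r) ℝ) (i : Fin n) :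
    rowNorm A i ^ 2 = ∑ k, A i k ^ 2 :=
  Real.sq_sqrt (Finset.sum_nonneg fun _ _ => sq_nonneg _)

lemma abs_mul_transpose_apply_le (A : Matrix (Fin n) (Fin r) ℝ) (i j : Fin n) :
    |(A * Aᵀ) i j| ≤ rowNorm A i * rowNorm A j := by
  have hneg := Real.sum_mul_le_sqrt_mul_sqrt Finset.univ (-A i ·) (A j ·)
  simp only [neg_mul, Finset.sum_neg_distrib, even_two, Even.neg_pow] at hneg
  rw [mul_apply, abs_le]
  exact ⟨neg_le.1 hneg, Real.sum_mul_le_sqrt_mul_sqrt _ _ _⟩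

lemma rowNorm_mul_le {rb : ℕ} (A : Matrix (Fin n) (Fin rb) ℝ) {C : Matrix (Fin rb) (Fin r) ℝ}
    (hC : Cᵀ * C = 1) (i : Fin n) : rowNorm (A * C) i ≤ rowNorm A i := by
  have hortho : Orthonormal ℝ fun k => WithLp.toLp 2 fun l => C l k := by
    classical
    rw [orthonormal_iff_ite]
    intro k k'
    simpa [EuclideanSpace.inner_toLp_toLp, dotProduct, mul_apply, mul_comm, one_apply] using
      congrFun (congrFun hC k) k'
  have hbessel := hortho.sum_inner_products_le (s := Finset.univ) (WithLp.toLp 2 (A i))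
  rw [EuclideanSpace.real_norm_sq_eq] at hbessel
  refine Real.sqrt_le_sqrt (le_of_eq_of_le ?_ hbessel)
  simp [EuclideanSpace.inner_toLp_toLp, dotProduct, mul_apply]

lemma exists_rowNorm_pos {A : Matrix (Fin n) (Fin r) ℝ} (hA : Aᵀ * A = 1) (hr : 0 < r) :
    ∃ i, 0 < rowNorm A i := by
  by_contra! h
  have hzero : A = 0 := by
    ext i k
    have hi : ∑ k, A i k ^ 2 = 0 := by
      rw [← sq_rowNorm, le_antisymm (h i) (Real.sqrt_nonneg _), zero_pow two_ne_zero]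
    exact pow_eq_zero_iff two_ne_zero |>.1 <|
      (Finset.sum_eq_zero_iff_of_nonneg fun _ _ => sq_nonneg _).1 hi k (Finset.mem_univ _)
  simpa [hzero] using congrFun (congrFun hA ⟨0, hr⟩) ⟨0, hr⟩

lemma transpose_mul_self_eq_one_of_mul {rb : ℕ} {A : Matrix (Fin n) (Fin rb) ℝ}
    {C : Matrix (Fin rb) (Fin r) ℝ} (hA : Aᵀ * A = 1) (hAC : (A * C)ᵀ * (A * C) = 1) :
    Cᵀ * C = 1 := by
  simpa [transpose_mul, Matrix.mul_assoc, ← Matrix.mul_assoc Aᵀ, hA] using hAC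

end RowNorm

section Linf

variable {m n : ℕ}

lemma linf_nonneg (X : Matrix (Fin m) (Fin n) ℝ) : 0 ≤ linf X :=
  Real.iSup_nonneg fun _ => Real.iSup_nonneg fun _ => abs_nonneg _

lemma abs_le_linf (X : Matrix (Fin m) (Fin n) ℝ) (i : Fin m) (j : Fin n) : |X i j| ≤ linf X :=
  (le_ciSup (Set.finite_range _).bddAbove j).trans
    (le_ciSup (f := fun i => ⨆ j, |X i j|) (Set.finite_range _).bddAbove i)

lemma linf_le {X : Matrix (Fin m) (Fin n) ℝ} {a : ℝ} (ha : 0 ≤ a) (h : ∀ i j, |X i j| ≤ a) :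
    linf X ≤ a :=
  Real.iSup_le (fun i => Real.iSup_le (h i) ha) ha

@[simp]
lemma linf_zero : linf (0 : Matrix (Fin m) (Fin n) ℝ) = 0 :=
  le_antisymm (linf_le le_rfl fun _ _ => by simp) (linf_nonneg 0)

end Linf

lemma mul_mul_apply_eq_sum {α l m k o : Type*} [Fintype m] [Fintype k]
    [NonUnitalNonAssocSemiring α] (A : Matrix l m α) (W : Matrix m k α) (B : Matrix k o α)
    (a : l) (b : o) : (A * W * B) a b = ∑ i, ∑ j, A a i * W i j * B j b := by
  simp only [mul_apply, Finset.sum_mul]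
  exact Finset.sum_comm

section Projection

variable {n r rb : ℕ} (U V : Matrix (Fin n) (Fin r) ℝ) (Ub Vb : Matrix (Fin n) (Fin rb) ℝ)

def projTcCoeff (a b i j : Fin n) : ℝ :=
  (U * Uᵀ) a i * (Vb * Vbᵀ) j b + (Ub * Ubᵀ) a i * (V * Vᵀ) j b - (U * Uᵀ) a i * (V * Vᵀ) j b

lemma projTc_apply (X : Matrix (Fin n) (Fin n) ℝ) (a b : Fin n) :
    projTc U V Ub Vb X a b = ∑ i, ∑ j, projTcCoeff U V Ub Vb a b i j * X i j := by
  rw [projTc, Matrix.mul_assoc (U * Uᵀ * X), Matrix.mul_assoc (Ub * Ubᵀ * X),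
    Matrix.mul_assoc (U * Uᵀ * X), Matrix.sub_apply, Matrix.add_apply, mul_mul_apply_eq_sum,
    mul_mul_apply_eq_sum, mul_mul_apply_eq_sum]
  simp only [projTcCoeff, ← Finset.sum_add_distrib, ← Finset.sum_sub_distrib]
  exact Finset.sum_congr rfl fun i _ => Finset.sum_congr rfl fun j _ => by ring

lemma projTc_sub (X Y : Matrix (Fin n) (Fin n) ℝ) :
    projTc U V Ub Vb X - projTc U V Ub Vb Y = projTc U V Ub Vb (X - Y) := by
  simp only [projTc, Matrix.mul_sub, Matrix.sub_mul]
  abel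

lemma projTc_smul_projB_sub_apply (p : ℝ) (ω : Fin n × Fin n → Bool) (Z : Matrix (Fin n) (Fin n) ℝ)
    (a b : Fin n) :
    (projTc U V Ub Vb (p⁻¹ • projB ω Z) - projTc U V Ub Vb Z) a b =
      ∑ q : Fin n × Fin n, projTcCoeff U V Ub Vb a b q.1 q.2 * Z q.1 q.2 * bernNoise p (ω q) := by
  rw [projTc_sub, projTc_apply, Fintype.sum_prod_type]
  refine Finset.sum_congr rfl fun i _ => Finset.sum_congr rfl fun j _ => ?_
  cases h : ω (i, j)
  · simp [projB, bernNoise, h]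
  · simp [projB, bernNoise, h]
    ring

variable {U V Ub Vb} in
lemma abs_projTcCoeff_le {α β : ℝ} (hU : ∀ i, rowNorm U i ≤ α) (hV : ∀ j, rowNorm V j ≤ α)
    (hUβ : ∀ i, rowNorm U i ≤ β) (hVβ : ∀ j, rowNorm V j ≤ β) (hUb : ∀ i, rowNorm Ub i ≤ β)
    (hVb : ∀ j, rowNorm Vb j ≤ β) (a b i j : Fin n) :
    |projTcCoeff U V Ub Vb a b i j| ≤ 3 * (α ^ 2 * β ^ 2) := by
  have hα : 0 ≤ α := (Real.sqrt_nonneg _).trans (hU a)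
  have hβ : 0 ≤ β := (Real.sqrt_nonneg _).trans (hUb a)
  have entry {k : ℕ} (A : Matrix (Fin n) (Fin k) ℝ) {s t : Fin n} {x y : ℝ}
      (hx : rowNorm A s ≤ x) (hy : rowNorm A t ≤ y) : |(A * Aᵀ) s t| ≤ x * y :=
    (abs_mul_transpose_apply_le A s t).trans
      (mul_le_mul hx hy (Real.sqrt_nonneg _) ((Real.sqrt_nonneg _).trans hx))
  unfold projTcCoeff
  calc _ ≤ |(U * Uᵀ) a i| * |(Vb * Vbᵀ) j b| + |(Ub * Ubᵀ) a i| * |(V * Vᵀ) j b|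
        + |(U * Uᵀ) a i| * |(V * Vᵀ) j b| := by
        simp only [← abs_mul]
        exact (abs_sub _ _).trans (add_le_add_left (abs_add_le _ _) _)
    _ ≤ (α * α) * (β * β) + (β * β) * (α * α) + (α * β) * (β * α) := by
        gcongr
        exacts [entry U (hU a) (hU i), entry Vb (hVb j) (hVb b), entry Ub (hUb a) (hUb i),
          entry V (hV j) (hV b), entry U (hU a) (hUβ i), entry V (hVβ j) (hV b)]
    _ = 3 * (α ^ 2 * β ^ 2) := by ring

end Projection

lemma four_mul_log_le {n : ℕ} {p m : ℝ} (hn : 2 ≤ n) (hm : 0 < m)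
    (hp : 100 * m * n * log n ≤ p) :
    4 * log n ≤ p ^ 2 / (72 * m ^ 2 * n ^ 2) := by
  have hn0 : (0 : ℝ) < n := by positivity
  have hlog : 0.69 < log n :=
    Real.log_two_gt_d9.trans_le' (by norm_num) |>.trans_le
      (Real.log_le_log two_pos (by exact_mod_cast hn))
  have hsq : (100 * m * n * log n) ^ 2 ≤ p ^ 2 := pow_le_pow_left₀ (by positivity) hp 2
  rw [le_div_iff₀ (by positivity)]
  nlinarith [mul_pos (mul_pos hm hn0) (hlog.trans' (by norm_num) : (0 : ℝ) < log n)]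

lemma pos_of_hundred_mul_log_le {n : ℕ} {p m : ℝ} (hn : 2 ≤ n) (hm : 0 < m)
    (hp : 100 * m * n * log n ≤ p) : 0 < p := by
  have := Real.log_pos (by exact_mod_cast hn : (1 : ℝ) < n)
  exact hp.trans_lt' (by positivity)

lemma measureReal_half_lt_abs_le {n : ℕ} {p m L : ℝ} (hn : 2 ≤ n) (hm : 0 < m)
    (hp : 100 * m * n * log n ≤ p) (hp1 : p ≤ 1) (hL : 0 ≤ L) (c : Fin n × Fin n → ℝ)
    (hc : ∀ q, |c q| ≤ 3 * m * L) :
    (sampleMeasure n p).real {ω | L / 2 < |∑ q, c q * bernNoise p (ω q)|} ≤ 2 / n ^ 4 := by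
  have hn0 : (0 : ℝ) < n := by positivity
  have hp0 := pos_of_hundred_mul_log_le hn hm hp
  have := isProbabilityMeasure_sampleMeasure (n := n) hp0.le hp1
  rcases hL.eq_or_lt with rfl | hL
  · have hc0 : ∀ q, c q = 0 := fun q => abs_nonpos_iff.1 (by simpa using hc q)
    simp only [hc0, zero_mul, Finset.sum_const_zero, abs_zero, zero_div, lt_self_iff_false,
      Set.ofPred_false, measureReal_empty]
    positivity
  calc _ ≤ (sampleMeasure n p).real {ω | L / 2 ≤ |∑ q, c q * bernNoise p (ω q)|} :=
        measureReal_mono <| Set.ofPred_subset_ofPred_of_imp fun _ => le_of_lt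
    _ ≤ 2 * exp (-(L / 2) ^ 2 / (2 * Fintype.card (Fin n × Fin n) * (3 * m * L / p) ^ 2)) :=
        measureReal_le_abs_sum_mul_bernNoise hp0 hp1 c hc (by positivity)
    _ = 2 * exp (-(p ^ 2 / (72 * m ^ 2 * n ^ 2))) := by
        congr 2
        simp only [Fintype.card_prod, Fintype.card_fin, Nat.cast_mul]
        field_simp
        ring
    _ ≤ 2 * exp (-(4 * log n)) := by gcongr; exact four_mul_log_le hn hm hp
    _ = 2 / n ^ 4 := by
        rw [Real.exp_neg, mul_comm (4 : ℝ), Real.exp_mul, Real.exp_log hn0, div_eq_mul_inv]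
        norm_cast

lemma measureReal_deviation_gt_le {n r rb : ℕ} {U V : Matrix (Fin n) (Fin r) ℝ}
    {Ub Vb : Matrix (Fin n) (Fin rb) ℝ} {p m : ℝ} (Z : Matrix (Fin n) (Fin n) ℝ) (hn : 2 ≤ n)
    (hm : 0 < m) (hp : 100 * m * n * log n ≤ p) (hp1 : p ≤ 1)
    (hK : ∀ a b i j, |projTcCoeff U V Ub Vb a b i j| ≤ 3 * m) :
    (sampleMeasure n p).real
        {ω | linf (projTc U V Ub Vb (p⁻¹ • projB ω Z) - projTc U V Ub Vb Z) ≤ 1 / 2 * linf Z}ᶜ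
      ≤ 2 / n ^ 2 := by
  have := isProbabilityMeasure_sampleMeasure (n := n) (pos_of_hundred_mul_log_le hn hm hp).le hp1
  set c : Fin n × Fin n → Fin n × Fin n → ℝ :=
    fun e q => projTcCoeff U V Ub Vb e.1 e.2 q.1 q.2 * Z q.1 q.2
  have hc : ∀ e q, |c e q| ≤ 3 * m * linf Z := fun e q => by
    rw [abs_mul]
    exact mul_le_mul (hK _ _ _ _) (abs_le_linf Z _ _) (abs_nonneg _) (by positivity)
  have hbad : {ω | linf (projTc U V Ub Vb (p⁻¹ • projB ω Z) - projTc U V Ub Vb Z) ≤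
      1 / 2 * linf Z}ᶜ ⊆ ⋃ e, {ω | linf Z / 2 < |∑ q, c e q * bernNoise p (ω q)|} := by
    intro ω hω
    by_contra hgood
    simp only [Set.mem_iUnion, Set.mem_ofPred_eq, not_exists, not_lt] at hgood
    refine hω <| linf_le (by linarith [linf_nonneg Z]) fun a b => ?_
    rw [projTc_smul_projB_sub_apply]
    linarith [hgood (a, b)]
  calc _ ≤ _ := measureReal_mono hbad
    _ ≤ _ := measureReal_iUnion_fintype_le _
    _ ≤ ∑ _e : Fin n × Fin n, 2 / (n : ℝ) ^ 4 := Finset.sum_le_sum fun e _ =>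
        measureReal_half_lt_abs_le hn hm hp hp1 (linf_nonneg Z) (c e) (hc e)
    _ = 2 / n ^ 2 := by
        have : (n : ℝ) ≠ 0 := by positivity
        simp only [Finset.sum_const, Finset.card_univ, Fintype.card_prod, Fintype.card_fin,
          nsmul_eq_mul, Nat.cast_mul]
        field_simp

lemma ofReal_one_sub_le_of_measureReal_compl_le {Ω : Type*} [MeasurableSpace Ω] {μ : Measure Ω}
    [IsProbabilityMeasure μ] {s : Set Ω} {x : ℝ} (hs : MeasurableSet s) (h : μ.real sᶜ ≤ x) :
    ENNReal.ofReal (1 - x) ≤ μ s := by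
  rw [probReal_compl_eq_one_sub hs] at h
  rw [← ofReal_measureReal]
  exact ENNReal.ofReal_le_ofReal (by linarith)

/-- Lemma 8: ℓ∞ bound, structured setting.
For a fixed matrix Z, if p ≥ c0 μ0 μ̄0 r r̄ log n / n, then with probability at
least 1 − c1 n^{−c2}, ‖(P_T R_Ω − P_T)Z‖_∞ ≤ (1/2)‖Z‖_∞. -/
theorem statement12 :
    ∃ c0 c1 c2 : ℝ, 0 < c0 ∧ 0 < c1 ∧ 0 < c2 ∧
      ∀ (n r rb : ℕ) (Z : Matrix (Fin n) (Fin n) ℝ)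
        (U V : Matrix (Fin n) (Fin r) ℝ) (Ub Vb : Matrix (Fin n) (Fin rb) ℝ)
        (μ0 μb0 p : ℝ),
        -- orthonormal columns and column space inclusions
        Uᵀ * U = 1 → Vᵀ * V = 1 → Ubᵀ * Ub = 1 → Vbᵀ * Vb = 1 →
        (∃ C : Matrix (Fin rb) (Fin r) ℝ, U = Ub * C) →
        (∃ C : Matrix (Fin rb) (Fin r) ℝ, V = Vb * C) →
        -- standard incoherence parameters μ0 and μ̄0
        (∀ i, rowNorm U i ≤ Real.sqrt (μ0 * r / n)) →
        (∀ j, rowNorm V j ≤ Real.sqrt (μ0 * r / n)) →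
        (∀ i, rowNorm Ub i ≤ Real.sqrt (μb0 * rb / n)) →
        (∀ j, rowNorm Vb j ≤ Real.sqrt (μb0 * rb / n)) →
        -- Bernoulli(p) sampling with p above the threshold
        0 ≤ p → p ≤ 1 →
        c0 * μ0 * μb0 * r * rb * Real.log n / n ≤ p →
        ENNReal.ofReal (1 - c1 * ((n : ℝ)) ^ (-c2)) ≤
          sampleMeasure n p
            {ω | linf (projTc U V Ub Vb (p⁻¹ • projB ω Z) - projTc U V Ub Vb Z) ≤
              1 / 2 * linf Z} := by
  refine ⟨100, 2, 2, by norm_num, by norm_num, by norm_num, ?_⟩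
  rintro n r rb Z U V Ub Vb μ0 μb0 p hU hV hUb hVb ⟨C, rfl⟩ ⟨D, rfl⟩ hiU hiV hiUb hiVb hp0 hp1 hp
  have := isProbabilityMeasure_sampleMeasure (n := n) hp0 hp1
  refine ofReal_one_sub_le_of_measureReal_compl_le .of_discrete ?_
  rcases lt_or_ge n 2 with hn | hn
  · interval_cases n
    · simp [linf]
    · norm_num
      exact measureReal_le_one.trans one_le_two
  rcases Nat.eq_zero_or_pos r with rfl | hr
  · have hU0 : Ub * C = 0 := Subsingleton.elim _ _
    have hV0 : Vb * D = 0 := Subsingleton.elim _ _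
    simp [projTc, hU0, hV0, linf_nonneg Z]
  have hUβ i := (rowNorm_mul_le Ub (transpose_mul_self_eq_one_of_mul hUb hU) i).trans (hiUb i)
  have hVβ j := (rowNorm_mul_le Vb (transpose_mul_self_eq_one_of_mul hVb hV) j).trans (hiVb j)
  obtain ⟨i, hi⟩ := exists_rowNorm_pos hU hr
  have hμ := Real.sqrt_pos.1 (hi.trans_le (hiU i))
  have hμb := Real.sqrt_pos.1 (hi.trans_le (hUβ i))
  refine (measureReal_deviation_gt_le Z hn ?_ ?_ hp1
    (abs_projTcCoeff_le hiU hiV hUβ hVβ hiUb hiVb)).trans_eq ?_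
  · rw [Real.sq_sqrt hμ.le, Real.sq_sqrt hμb.le]
    exact mul_pos hμ hμb
  · rw [Real.sq_sqrt hμ.le, Real.sq_sqrt hμb.le]
    convert hp using 1
    field_simp
  · rw [Real.rpow_neg (Nat.cast_nonneg n), Real.rpow_two, div_eq_mul_inv]

end
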